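/- arXiv:1702.08557 — 7 statements merged into one kernel-verified Lean document; each statement's English description precedes it below -/
import Mathlib

section
/- Let (G, M, I) be a finite formal context and let (g, m) ∈ I. Then the density of the OA-bicluster (m′, g′) satisfies (|m′| + |g′| − 1) / (|m′| · |g′|) ≤ ρ(m′, g′) ≤ 1. -/
open Finset

/-- The derivation `m′` of an attribute `m`. -/
def extent {G M : Type*} [Fintype G] [DecidableEq G] [DecidableEq M] (I : Finset (G × M))
    (m : M) : Finset G :=
  univ.filter fun x => (x, m) ∈ I

/-- The derivation `g′` of an object `g`. -/
def intent {G M : Type*} [Fintype M] [DecidableEq G] [DecidableEq M] (I : Finset (G × M))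
    (g : G) : Finset M :=
  univ.filter fun n => (g, n) ∈ I

@[simp]
theorem mem_extent {G M : Type*} [Fintype G] [DecidableEq G] [DecidableEq M]
    {I : Finset (G × M)} {m : M} {x : G} : x ∈ extent I m ↔ (x, m) ∈ I := by
  simp [extent]

@[simp]
theorem mem_intent {G M : Type*} [Fintype M] [DecidableEq G] [DecidableEq M]
    {I : Finset (G × M)} {g : G} {n : M} : n ∈ intent I g ↔ (g, n) ∈ I := by
  simp [intent]

theorem Finset.card_product_singleton_union_singleton_product_add_one {α β : Type*}
    [DecidableEq α] [DecidableEq β] {s : Finset α} {t : Finset β} {a : α} {b : β}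
    (ha : a ∈ s) (hb : b ∈ t) : #(s ×ˢ {b} ∪ {a} ×ˢ t) + 1 = #s + #t := by
  have hinter : s ×ˢ {b} ∩ {a} ×ˢ t = {(a, b)} := by
    ext ⟨x, y⟩
    simp only [mem_inter, mem_product, mem_singleton, Prod.mk.injEq]
    constructor
    · rintro ⟨⟨-, rfl⟩, rfl, -⟩
      exact ⟨rfl, rfl⟩
    · rintro ⟨rfl, rfl⟩
      exact ⟨⟨ha, rfl⟩, rfl, hb⟩
  have := card_union_add_card_inter (s ×ˢ {b}) ({a} ×ˢ t)
  rwa [hinter, card_singleton, card_product, card_product, card_singleton, card_singleton,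
    mul_one, one_mul] at this

/-- The incidences of an OA-bicluster `(m′, g′)` contain the "cross" `m′ × {m} ∪ {g} × g′`,
whose two arms meet only in `(g, m)`. -/
theorem card_extent_add_card_intent_le {G M : Type*} [Fintype G] [Fintype M] [DecidableEq G]
    [DecidableEq M] {I : Finset (G × M)} {g : G} {m : M} (hgm : (g, m) ∈ I) :
    #(extent I m) + #(intent I g) ≤ #(I ∩ extent I m ×ˢ intent I g) + 1 := by
  have hcross : extent I m ×ˢ {m} ∪ {g} ×ˢ intent I g ⊆ I ∩ extent I m ×ˢ intent I g := by
    rintro ⟨x, n⟩ hxn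
    simp only [mem_union, mem_product, mem_singleton, mem_extent, mem_intent] at hxn
    rcases hxn with ⟨hx, rfl⟩ | ⟨rfl, hn⟩
    · exact mem_inter.2 ⟨hx, mem_product.2 ⟨mem_extent.2 hx, mem_intent.2 hgm⟩⟩
    · exact mem_inter.2 ⟨hn, mem_product.2 ⟨mem_extent.2 hgm, mem_intent.2 hn⟩⟩
  rw [← card_product_singleton_union_singleton_product_add_one (mem_extent.2 hgm)
    (mem_intent.2 hgm)]
  exact Nat.add_le_add_right (card_le_card hcross) 1

/-- For a finite formal context `(G, M, I)` and `(g, m) ∈ I`, the density of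
the OA-bicluster `(m′, g′)` satisfies `(|m′| + |g′| − 1) / (|m′|·|g′|) ≤ ρ(m′, g′) ≤ 1`. -/
theorem oa_bicluster_density_bounds {G M : Type*} [Fintype G] [Fintype M]
    [DecidableEq G] [DecidableEq M]
    (I : Finset (G × M)) (g : G) (m : M) (hgm : (g, m) ∈ I)
    (mP : Finset G) (gP : Finset M)
    (hmP : mP = Finset.univ.filter (fun x : G => (x, m) ∈ I))
    (hgP : gP = Finset.univ.filter (fun n : M => (g, n) ∈ I))
    (ρ : ℚ)
    (hρ : ρ = ((I ∩ mP ×ˢ gP).card : ℚ) / ((mP.card : ℚ) * (gP.card : ℚ))) :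
    ((mP.card : ℚ) + (gP.card : ℚ) - 1) / ((mP.card : ℚ) * (gP.card : ℚ)) ≤ ρ ∧ ρ ≤ 1 := by
  change mP = extent I m at hmP
  change gP = intent I g at hgP
  subst hmP hgP hρ
  have hlow : (#(extent I m) + #(intent I g) - 1 : ℚ) ≤ #(I ∩ extent I m ×ˢ intent I g) := by
    have := card_extent_add_card_intent_le hgm
    rw [sub_le_iff_le_add]
    exact_mod_cast this
  have hhigh : #(I ∩ extent I m ×ˢ intent I g) ≤ #(extent I m) * #(intent I g) :=
    (card_le_card inter_subset_right).trans_eq (card_product _ _)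
  have hpos : (0 : ℚ) < #(extent I m) * #(intent I g) := by
    have := card_pos.2 ⟨g, mem_extent.2 hgm⟩
    have := card_pos.2 ⟨m, mem_intent.2 hgm⟩
    positivity
  refine ⟨by gcongr, ?_⟩
  rw [div_le_one hpos]
  exact_mod_cast hhigh
end

section
/- Let (G, M, I) be a finite formal context and let (g, m) ∈ I. The OA-bicluster (m′, g′) is a formal concept, i.e. (m′)′ = g′ and (g′)′ = m′, if and only if its density satisfies ρ(m′, g′) = 1. -/
/-!
Both halves of the concept condition, and density one, say the same thing: the rectangle
`m′ × g′` lies in `I`. Since `g ∈ m′`, the intent `(m′)′` is always contained in `g′`, so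
`(m′)′ = g′` amounts to `g′ ⊆ (m′)′`, i.e. to `m′ × g′ ⊆ I`; symmetrically for `(g′)′ = m′`.
Density one means `|I ∩ (m′ × g′)| = |m′ × g′|`, which for finite sets is again `m′ × g′ ⊆ I`.
-/

open Finset

namespace Finset

variable {α β : Type*} [DecidableEq α] [DecidableEq β]

theorem card_inter_eq_card_right_iff {s t : Finset α} : #(s ∩ t) = #t ↔ t ⊆ s := by
  rw [← inter_eq_right, ← eq_iff_card_le_of_subset inter_subset_right]
  exact ⟨ge_of_eq, (card_le_card inter_subset_right).antisymm⟩

theorem card_inter_product_div_eq_one_iff {K : Type*} [DivisionRing K] [CharZero K]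
    (I : Finset (α × β)) {A : Finset α} {B : Finset β} (hA : A.Nonempty) (hB : B.Nonempty) :
    (#(I ∩ A ×ˢ B) : K) / (#A * #B) = 1 ↔ A ×ˢ B ⊆ I := by
  have hAB : (#A * #B : K) ≠ 0 :=
    mul_ne_zero (Nat.cast_ne_zero.2 hA.card_ne_zero) (Nat.cast_ne_zero.2 hB.card_ne_zero)
  rw [div_eq_one_iff_eq hAB, ← Nat.cast_mul, ← card_product, Nat.cast_inj,
    card_inter_eq_card_right_iff]

end Finset

section Polars

variable {G M : Type*} [Fintype G] [Fintype M] [DecidableEq G] [DecidableEq M]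
  (I : Finset (G × M))

theorem subset_filter_forall_mem_left_iff {A : Finset G} {B : Finset M} :
    B ⊆ univ.filter (fun n => ∀ x ∈ A, (x, n) ∈ I) ↔ A ×ˢ B ⊆ I := by
  simp only [subset_iff, mem_filter, mem_univ, true_and, mem_product, Prod.forall]
  exact ⟨fun h x n hxn => h hxn.2 x hxn.1, fun h n hn x hx => h x n ⟨hx, hn⟩⟩

theorem subset_filter_forall_mem_right_iff {A : Finset G} {B : Finset M} :
    A ⊆ univ.filter (fun x => ∀ n ∈ B, (x, n) ∈ I) ↔ A ×ˢ B ⊆ I := by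
  simp only [subset_iff, mem_filter, mem_univ, true_and, mem_product, Prod.forall]
  exact ⟨fun h x n hxn => h hxn.1 n hxn.2, fun h x hx n hn => h x n ⟨hx, hn⟩⟩

theorem filter_forall_mem_left_eq_iff {A : Finset G} {g : G} (hg : g ∈ A) :
    univ.filter (fun n => ∀ x ∈ A, (x, n) ∈ I) = univ.filter (fun n => (g, n) ∈ I) ↔
      A ×ˢ univ.filter (fun n => (g, n) ∈ I) ⊆ I := by
  rw [← subset_filter_forall_mem_left_iff, subset_antisymm_iff,
    and_iff_right (monotone_filter_right _ fun n _ h => h g hg)]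

theorem filter_forall_mem_right_eq_iff {B : Finset M} {m : M} (hm : m ∈ B) :
    univ.filter (fun x => ∀ n ∈ B, (x, n) ∈ I) = univ.filter (fun x => (x, m) ∈ I) ↔
      univ.filter (fun x => (x, m) ∈ I) ×ˢ B ⊆ I := by
  rw [← subset_filter_forall_mem_right_iff, subset_antisymm_iff,
    and_iff_right (monotone_filter_right _ fun x _ h => h m hm)]

end Polars

/-- For a finite formal context `(G, M, I)` and `(g, m) ∈ I`, the OA-bicluster
`(m′, g′)` is a formal concept, i.e. `(m′)′ = g′` and `(g′)′ = m′`, iff `ρ(m′, g′) = 1`. -/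
theorem oa_bicluster_concept_iff_density_one {G M : Type*} [Fintype G] [Fintype M]
    [DecidableEq G] [DecidableEq M]
    (I : Finset (G × M)) (g : G) (m : M) (hgm : (g, m) ∈ I)
    (mP : Finset G) (gP : Finset M)
    (hmP : mP = Finset.univ.filter (fun x : G => (x, m) ∈ I))
    (hgP : gP = Finset.univ.filter (fun n : M => (g, n) ∈ I))
    (ρ : ℚ)
    (hρ : ρ = ((I ∩ mP ×ˢ gP).card : ℚ) / ((mP.card : ℚ) * (gP.card : ℚ))) :
    (Finset.univ.filter (fun n : M => ∀ x ∈ mP, (x, n) ∈ I) = gP ∧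
     Finset.univ.filter (fun x : G => ∀ n ∈ gP, (x, n) ∈ I) = mP) ↔ ρ = 1 := by
  have hg : g ∈ mP := by simp [hmP, hgm]
  have hm : m ∈ gP := by simp [hgP, hgm]
  rw [hρ, card_inter_product_div_eq_one_iff I ⟨g, hg⟩ ⟨m, hm⟩]
  subst hmP hgP
  rw [filter_forall_mem_left_eq_iff I hg, filter_forall_mem_right_eq_iff I hm, and_self]
end

section
/- Let (G, M, I) be a formal context and let (A, B) be a formal concept with A ≠ ∅ and B ≠ ∅. Then there exists a pair (g, m) ∈ I such that the OA-bicluster (m′, g′) contains (A, B) component-wise, i.e. A ⊆ m′ and B ⊆ g′. In particular, with minimal density threshold ρ_min = 0 every formal concept with nonempty extent and intent is covered by some OA-bicluster of the bicluster collection. -/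
/-- For a formal context `(G, M, I)` and a formal concept `(A, B)` with
`A ≠ ∅` and `B ≠ ∅`, there exists `(g, m) ∈ I` such that the OA-bicluster `(m′, g′)`
covers `(A, B)` component-wise: `A ⊆ m′` and `B ⊆ g′`. -/
theorem concept_covered_by_oa_bicluster {G M : Type*} (I : Set (G × M))
    (up : Set G → Set M) (dn : Set M → Set G)
    (hup : ∀ A : Set G, up A = {n : M | ∀ x ∈ A, (x, n) ∈ I})
    (hdn : ∀ B : Set M, dn B = {x : G | ∀ n ∈ B, (x, n) ∈ I})
    (A : Set G) (B : Set M) (hconc : up A = B ∧ dn B = A)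
    (hA : A.Nonempty) (hB : B.Nonempty) :
    ∃ g m, (g, m) ∈ I ∧ A ⊆ dn {m} ∧ B ⊆ up {g} := by
  obtain ⟨g, hg⟩ := hA
  obtain ⟨m, hm⟩ := hB
  have hB_eq : B = {n : M | ∀ x ∈ A, (x, n) ∈ I} := hconc.1 ▸ hup A
  rw [hB_eq] at hm
  refine ⟨g, m, hm g hg, fun x hx => ?_, fun n hn => ?_⟩
  · simpa [hdn] using hm x hx
  · rw [hB_eq] at hn
    simpa [hup] using hn g hg
end

section
/- Let K = (G, M, B, Y) be a triadic context, with Y ⊆ G × M × B. For every triadic concept T_c = (X_c, Y_c, Z_c) of K with nonempty X_c, Y_c, Z_c, and for every triple (g, m, b) ∈ X_c × Y_c × Z_c, the prime operator based OAC-tricluster T = ((m, b)′, (g, b)′, (g, m)′) contains T_c component-wise: X_c ⊆ (m, b)′, Y_c ⊆ (g, b)′ and Z_c ⊆ (g, m)′. In particular, for ρ_min = 0, every triadic concept of K with nonempty components is contained in some prime OAC-tricluster of K. -/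
theorem subset_prime_tricluster_of_prod_subset {G M C : Type*} {Y : Set (G × M × C)}
    {Xc : Set G} {Yc : Set M} {Zc : Set C} (hsub : Xc ×ˢ Yc ×ˢ Zc ⊆ Y)
    {g : G} {m : M} {b : C} (hg : g ∈ Xc) (hm : m ∈ Yc) (hb : b ∈ Zc) :
    Xc ⊆ {x : G | (x, m, b) ∈ Y} ∧
      Yc ⊆ {y : M | (g, y, b) ∈ Y} ∧
      Zc ⊆ {z : C | (g, m, z) ∈ Y} :=
  ⟨fun _ hx => hsub ⟨hx, hm, hb⟩, fun _ hy => hsub ⟨hg, hy, hb⟩, fun _ hz => hsub ⟨hg, hm, hz⟩⟩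

theorem triconcept_contained_in_prime_tricluster_general {G M C : Type*} (Y : Set (G × M × C))
    (Xc : Set G) (Yc : Set M) (Zc : Set C)
    (hX : Xc.Nonempty) (hY : Yc.Nonempty) (hZ : Zc.Nonempty)
    (hsub : {p : G × M × C | p.1 ∈ Xc ∧ p.2.1 ∈ Yc ∧ p.2.2 ∈ Zc} ⊆ Y) :
    (∀ g ∈ Xc, ∀ m ∈ Yc, ∀ b ∈ Zc,
      Xc ⊆ {x : G | (x, m, b) ∈ Y} ∧
      Yc ⊆ {y : M | (g, y, b) ∈ Y} ∧
      Zc ⊆ {z : C | (g, m, z) ∈ Y}) ∧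
    (∃ g m b, (g, m, b) ∈ Y ∧
      Xc ⊆ {x : G | (x, m, b) ∈ Y} ∧
      Yc ⊆ {y : M | (g, y, b) ∈ Y} ∧
      Zc ⊆ {z : C | (g, m, z) ∈ Y}) := by
  have hprod : Xc ×ˢ Yc ×ˢ Zc ⊆ Y := hsub
  obtain ⟨g, hg⟩ := hX
  obtain ⟨m, hm⟩ := hY
  obtain ⟨b, hb⟩ := hZ
  exact ⟨fun _ hg _ hm _ hb => subset_prime_tricluster_of_prod_subset hprod hg hm hb,
    g, m, b, hprod ⟨hg, hm, hb⟩, subset_prime_tricluster_of_prod_subset hprod hg hm hb⟩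

/-- Let `(G, M, C, Y)` be a triadic context. For every triadic concept
`(Xc, Yc, Zc)` with nonempty components, and every `(g, m, b) ∈ Xc × Yc × Zc`, the prime
operator based OAC-tricluster `((m,b)′, (g,b)′, (g,m)′)` contains the concept
component-wise; in particular (for `ρ_min = 0`), every triadic concept of the context
with nonempty components is contained in some prime OAC-tricluster of the context. -/
theorem triconcept_contained_in_prime_tricluster {G M C : Type*} (Y : Set (G × M × C))
    (Xc : Set G) (Yc : Set M) (Zc : Set C)
    (hX : Xc.Nonempty) (hY : Yc.Nonempty) (hZ : Zc.Nonempty)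
    (hsub : {p : G × M × C | p.1 ∈ Xc ∧ p.2.1 ∈ Yc ∧ p.2.2 ∈ Zc} ⊆ Y)
    (hmax : ∀ (X' : Set G) (Y' : Set M) (Z' : Set C), Xc ⊆ X' → Yc ⊆ Y' → Zc ⊆ Z' →
      {p : G × M × C | p.1 ∈ X' ∧ p.2.1 ∈ Y' ∧ p.2.2 ∈ Z'} ⊆ Y →
      X' = Xc ∧ Y' = Yc ∧ Z' = Zc) :
    (∀ g ∈ Xc, ∀ m ∈ Yc, ∀ b ∈ Zc,
      Xc ⊆ {x : G | (x, m, b) ∈ Y} ∧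
      Yc ⊆ {y : M | (g, y, b) ∈ Y} ∧
      Zc ⊆ {z : C | (g, m, z) ∈ Y}) ∧
    (∃ g m b, (g, m, b) ∈ Y ∧
      Xc ⊆ {x : G | (x, m, b) ∈ Y} ∧
      Yc ⊆ {y : M | (g, y, b) ∈ Y} ∧
      Zc ⊆ {z : C | (g, m, z) ∈ Y}) :=
  triconcept_contained_in_prime_tricluster_general Y Xc Yc Zc hX hY hZ hsub
end

section
/- Let (G, M, I) be a finite formal context with |I| > 0 and let (g, m) ∈ I. Then the local bicluster modularity of the OA-bicluster (m′, g′), defined as Mod_l(m′, g′) = (1/(|g′|·|m′|)) · Σ_{(g̃, m̃) ∈ m′ × g′} ( [ (g̃, m̃) ∈ I ] − |g̃′|·|m̃′| / |I| ), satisfies Mod_l(m′, g′) = ρ(m′, g′) − (d̄_G · d̄_M) / |I|, where d̄_G = (Σ_{g̃ ∈ m′} |g̃′|) / |m′| is the average degree of objects in m′ and d̄_M = (Σ_{m̃ ∈ g′} |m̃′|) / |g′| is the average degree of attributes in g′. -/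
open Finset

theorem Finset.sum_boole_mem_eq_card_inter {ι R : Type*} [AddCommMonoidWithOne R] [DecidableEq ι]
    (s t : Finset ι) : ∑ i ∈ s, (if i ∈ t then (1 : R) else 0) = #(t ∩ s) := by
  rw [sum_boole, filter_mem_eq_inter, inter_comm]

theorem local_bicluster_modularity_general {G M : Type*} [Fintype G] [Fintype M]
    [DecidableEq G] [DecidableEq M]
    (I : Finset (G × M))
    (mP : Finset G) (gP : Finset M)
    (ρ : ℚ)
    (hρ : ρ = ((I ∩ mP ×ˢ gP).card : ℚ) / ((mP.card : ℚ) * (gP.card : ℚ)))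
    (dG dM : ℚ)
    (hdG : dG = (∑ x ∈ mP, ((Finset.univ.filter (fun n : M => (x, n) ∈ I)).card : ℚ)) /
      (mP.card : ℚ))
    (hdM : dM = (∑ n ∈ gP, ((Finset.univ.filter (fun x : G => (x, n) ∈ I)).card : ℚ)) /
      (gP.card : ℚ))
    (Modl : ℚ)
    (hModl : Modl = (1 / ((gP.card : ℚ) * (mP.card : ℚ))) *
      ∑ p ∈ mP ×ˢ gP,
        ((if (p.1, p.2) ∈ I then (1 : ℚ) else 0) -
          ((Finset.univ.filter (fun n : M => (p.1, n) ∈ I)).card : ℚ) *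
            ((Finset.univ.filter (fun x : G => (x, p.2) ∈ I)).card : ℚ) / (I.card : ℚ))) :
    Modl = ρ - dG * dM / (I.card : ℚ) := by
  subst hModl hρ hdG hdM
  simp only [Prod.mk.eta]
  rw [sum_sub_distrib, sum_boole_mem_eq_card_inter, ← sum_div, sum_product]
  simp only [← sum_mul_sum]
  ring

/-- For a finite formal context `(G, M, I)` with `|I| > 0` and `(g, m) ∈ I`,
the local bicluster modularity of the OA-bicluster `(m′, g′)` equals
`ρ(m′, g′) − (d̄_G · d̄_M)/|I|`, where `d̄_G` and `d̄_M` are the average degrees of the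
objects in `m′` and of the attributes in `g′`, respectively. -/
theorem local_bicluster_modularity {G M : Type*} [Fintype G] [Fintype M]
    [DecidableEq G] [DecidableEq M]
    (I : Finset (G × M)) (hI : 0 < I.card)
    (g : G) (m : M) (hgm : (g, m) ∈ I)
    (mP : Finset G) (gP : Finset M)
    (hmP : mP = Finset.univ.filter (fun x : G => (x, m) ∈ I))
    (hgP : gP = Finset.univ.filter (fun n : M => (g, n) ∈ I))
    (ρ : ℚ)
    (hρ : ρ = ((I ∩ mP ×ˢ gP).card : ℚ) / ((mP.card : ℚ) * (gP.card : ℚ)))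
    (dG dM : ℚ)
    (hdG : dG = (∑ x ∈ mP, ((Finset.univ.filter (fun n : M => (x, n) ∈ I)).card : ℚ)) /
      (mP.card : ℚ))
    (hdM : dM = (∑ n ∈ gP, ((Finset.univ.filter (fun x : G => (x, n) ∈ I)).card : ℚ)) /
      (gP.card : ℚ))
    (Modl : ℚ)
    (hModl : Modl = (1 / ((gP.card : ℚ) * (mP.card : ℚ))) *
      ∑ p ∈ mP ×ˢ gP,
        ((if (p.1, p.2) ∈ I then (1 : ℚ) else 0) -
          ((Finset.univ.filter (fun n : M => (p.1, n) ∈ I)).card : ℚ) *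
            ((Finset.univ.filter (fun x : G => (x, p.2) ∈ I)).card : ℚ) / (I.card : ℚ))) :
    Modl = ρ - dG * dM / (I.card : ℚ) :=
  local_bicluster_modularity_general I mP gP ρ hρ dG dM hdG hdM Modl hModl
end

section
/- Let (G, M, I) be a finite formal context and let (g, m) ∈ I, with OA-bicluster (m′, g′). Then Σ_{g̃ ∈ m′} |g̃′ ∩ g′| + Σ_{m̃ ∈ g′} |m̃′ ∩ m′| = 2 · |I ∩ (m′ × g′)|. Consequently, the weak-community condition Σ_{g̃ ∈ m′} |g̃′ ∩ g′| + Σ_{m̃ ∈ g′} |m̃′ ∩ m′| ≥ Σ_{g̃ ∈ m′} |g̃′ ∩ (M \ g′)| + Σ_{m̃ ∈ g′} |m̃′ ∩ (G \ m′)| holds if and only if ρ(m′, g′) ≥ cut(m′, g′) / (2 · |g′| · |m′|), where cut(m′, g′) = Σ_{g̃ ∈ m′} |g̃′ ∩ (M \ g′)| + Σ_{m̃ ∈ g′} |m̃′ ∩ (G \ m′)|. -/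
/-! Counting the incidences of `I` inside `m′ × g′` row by row and column by column gives
`|I ∩ (m′ × g′)|` twice, which is the identity. Since `g ∈ m′` and `m ∈ g′`, both factors of the
denominator are positive, so the density inequality is `cut ≤ 2 · |I ∩ (m′ × g′)|` after clearing
denominators. -/

open Finset

section IncidenceCount

variable {α β : Type*} [DecidableEq α] [DecidableEq β]

theorem card_inter_product_eq_sum_card_row [Fintype β] (I : Finset (α × β)) (A : Finset α)
    (B : Finset β) :
    (I ∩ A ×ˢ B).card = ∑ x ∈ A, ((univ.filter fun n => (x, n) ∈ I) ∩ B).card := by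
  rw [inter_comm, ← filter_mem_eq_inter, card_filter, sum_product]
  refine sum_congr rfl fun x _ => ?_
  rw [← card_filter]
  congr 1
  ext n; simp [and_comm]

theorem card_inter_product_eq_sum_card_col [Fintype α] (I : Finset (α × β)) (A : Finset α)
    (B : Finset β) :
    (I ∩ A ×ˢ B).card = ∑ n ∈ B, ((univ.filter fun x => (x, n) ∈ I) ∩ A).card := by
  rw [inter_comm, ← filter_mem_eq_inter, card_filter, sum_product_right]
  refine sum_congr rfl fun n _ => ?_
  rw [← card_filter]
  congr 1
  ext x; simp [and_comm]

end IncidenceCount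

theorem div_two_mul_le_div_iff {K : Type*} [Field K] [LinearOrder K] [IsStrictOrderedRing K]
    {a b c e : K} (ha : 0 < a) (hb : 0 < b) : c / (2 * b * a) ≤ e / (a * b) ↔ c ≤ 2 * e := by
  rw [mul_assoc, mul_comm b a, ← div_div, div_le_div_iff_of_pos_right (by positivity),
    div_le_iff₀ two_pos, mul_comm]

theorem weak_community_iff_density_ge_cut_general {G M : Type*} [Fintype G] [Fintype M]
    [DecidableEq G] [DecidableEq M]
    (I : Finset (G × M)) (g : G) (m : M) (hgm : (g, m) ∈ I)
    (mP : Finset G) (gP : Finset M)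
    (hmP : mP = Finset.univ.filter (fun x : G => (x, m) ∈ I))
    (hgP : gP = Finset.univ.filter (fun n : M => (g, n) ∈ I))
    (ρ : ℚ)
    (hρ : ρ = ((I ∩ mP ×ˢ gP).card : ℚ) / ((mP.card : ℚ) * (gP.card : ℚ)))
    (cut : ℕ) :
    (∑ x ∈ mP, ((Finset.univ.filter (fun n : M => (x, n) ∈ I)) ∩ gP).card +
      ∑ n ∈ gP, ((Finset.univ.filter (fun x : G => (x, n) ∈ I)) ∩ mP).card =
      2 * (I ∩ mP ×ˢ gP).card) ∧
    ((cut ≤ ∑ x ∈ mP, ((Finset.univ.filter (fun n : M => (x, n) ∈ I)) ∩ gP).card +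
        ∑ n ∈ gP, ((Finset.univ.filter (fun x : G => (x, n) ∈ I)) ∩ mP).card) ↔
      (cut : ℚ) / (2 * (gP.card : ℚ) * (mP.card : ℚ)) ≤ ρ) := by
  have hdegree_sum : ∑ x ∈ mP, ((univ.filter fun n => (x, n) ∈ I) ∩ gP).card +
      ∑ n ∈ gP, ((univ.filter fun x => (x, n) ∈ I) ∩ mP).card = 2 * (I ∩ mP ×ˢ gP).card := by
    rw [← card_inter_product_eq_sum_card_row, ← card_inter_product_eq_sum_card_col, two_mul]
  have hmP_pos : (0 : ℚ) < mP.card := by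
    exact_mod_cast card_pos.2 ⟨g, by simp [hmP, hgm]⟩
  have hgP_pos : (0 : ℚ) < gP.card := by
    exact_mod_cast card_pos.2 ⟨m, by simp [hgP, hgm]⟩
  refine ⟨hdegree_sum, ?_⟩
  rw [hdegree_sum, hρ, div_two_mul_le_div_iff hmP_pos hgP_pos]
  exact_mod_cast Iff.rfl

/-- For a finite formal context `(G, M, I)` and `(g, m) ∈ I` with
OA-bicluster `(m′, g′)`:
`Σ_{g̃ ∈ m′} |g̃′ ∩ g′| + Σ_{m̃ ∈ g′} |m̃′ ∩ m′| = 2·|I ∩ (m′ × g′)|`; consequently the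
weak-community condition (internal degree sum at least the cut) holds iff
`ρ(m′, g′) ≥ cut(m′, g′) / (2·|g′|·|m′|)`. -/
theorem weak_community_iff_density_ge_cut {G M : Type*} [Fintype G] [Fintype M]
    [DecidableEq G] [DecidableEq M]
    (I : Finset (G × M)) (g : G) (m : M) (hgm : (g, m) ∈ I)
    (mP : Finset G) (gP : Finset M)
    (hmP : mP = Finset.univ.filter (fun x : G => (x, m) ∈ I))
    (hgP : gP = Finset.univ.filter (fun n : M => (g, n) ∈ I))
    (ρ : ℚ)
    (hρ : ρ = ((I ∩ mP ×ˢ gP).card : ℚ) / ((mP.card : ℚ) * (gP.card : ℚ)))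
    (cut : ℕ)
    (hcut : cut = ∑ x ∈ mP, ((Finset.univ.filter (fun n : M => (x, n) ∈ I)) \ gP).card +
      ∑ n ∈ gP, ((Finset.univ.filter (fun x : G => (x, n) ∈ I)) \ mP).card) :
    (∑ x ∈ mP, ((Finset.univ.filter (fun n : M => (x, n) ∈ I)) ∩ gP).card +
      ∑ n ∈ gP, ((Finset.univ.filter (fun x : G => (x, n) ∈ I)) ∩ mP).card =
      2 * (I ∩ mP ×ˢ gP).card) ∧
    ((cut ≤ ∑ x ∈ mP, ((Finset.univ.filter (fun n : M => (x, n) ∈ I)) ∩ gP).card +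
        ∑ n ∈ gP, ((Finset.univ.filter (fun x : G => (x, n) ∈ I)) ∩ mP).card) ↔
      (cut : ℚ) / (2 * (gP.card : ℚ) * (mP.card : ℚ)) ≤ ρ) :=
  weak_community_iff_density_ge_cut_general I g m hgm mP gP hmP hgP ρ hρ cut
end

section
/- Let Γ = (V, E) be a simple graph (E symmetric and irreflexive as a relation on V), and form the formal context K = (V, V, Ĩ), where Ĩ is the reflexive closure of E: (u, v) ∈ Ĩ iff u = v or (u, v) ∈ E. Then for every A ⊆ V, the pair (A, A) is a formal concept of K (i.e. A′ = A with respect to Ĩ) if and only if A is a maximal clique of Γ, i.e. every two distinct vertices of A are adjacent in Γ and no proper superset of A has this property. -/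
/-!
Write `s′` for the upper polar of `s` along the reflexive closure of `r`. A vertex `v` lies in
`s′` exactly when it is adjacent to every vertex of `s` other than itself, so `s ⊆ s′` says that
`s` is a clique, and, for a clique `s`, `v ∈ s′` says that `insert v s` is again a clique.
Hence `s′ ⊆ s` says that no vertex extends the clique `s`, which is maximality.
-/

section

open Set

variable {α : Type*} {r : α → α → Prop} {s : Set α} {a : α}

theorem mem_upperPolar_reflClosure_iff :
    a ∈ upperPolar (fun b c => b = c ∨ r b c) s ↔ ∀ b ∈ s, b ≠ a → r b a :=
  forall₂_congr fun _ _ => or_iff_not_imp_left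

theorem subset_upperPolar_reflClosure_iff :
    s ⊆ upperPolar (fun b c => b = c ∨ r b c) s ↔ s.Pairwise r := by
  simp only [subset_def, mem_upperPolar_reflClosure_iff]
  exact ⟨fun h _ ha _ hb hab => h _ hb _ ha hab, fun h _ hb _ ha hab => h ha hb hab⟩

theorem Set.Pairwise.mem_upperPolar_reflClosure_iff [Std.Symm r] (hs : s.Pairwise r) :
    a ∈ upperPolar (fun b c => b = c ∨ r b c) s ↔ (insert a s).Pairwise r := by
  rw [_root_.mem_upperPolar_reflClosure_iff, pairwise_insert_of_symm, and_iff_right hs]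
  exact forall₂_congr fun _ _ => by rw [ne_comm, Std.Symm.iff (r := r)]

theorem upperPolar_reflClosure_eq_self_iff [Std.Symm r] :
    upperPolar (fun b c => b = c ∨ r b c) s = s ↔ Maximal (·.Pairwise r) s := by
  rw [maximal_iff_forall_insert fun _ _ ht hst => ht.mono hst, Subset.antisymm_iff,
    subset_upperPolar_reflClosure_iff, and_comm]
  refine and_congr_right fun hs => ?_
  simp only [subset_def, hs.mem_upperPolar_reflClosure_iff]
  exact ⟨fun h x hx hins => hx (h x hins), fun h x hins => by_contra fun hx => h x hx hins⟩

end

theorem concept_iff_maximal_clique_general {V : Type*} (E : V → V → Prop)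
    (hsymm : ∀ u w : V, E u w → E w u)
    (A : Set V) :
    {v : V | ∀ a ∈ A, a = v ∨ E a v} = A ↔
      ((∀ u ∈ A, ∀ w ∈ A, u ≠ w → E u w) ∧
        ∀ B : Set V, A ⊆ B → (∀ u ∈ B, ∀ w ∈ B, u ≠ w → E u w) → B = A) := by
  have : Std.Symm E := ⟨hsymm⟩
  change upperPolar (fun b c => b = c ∨ E b c) A = A ↔ _
  rw [upperPolar_reflClosure_eq_self_iff, maximal_iff]
  exact and_congr_right fun _ =>
    ⟨fun h B hAB hB => (h hB hAB).symm, fun h B hB hAB => (h B hAB hB).symm⟩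

/-- Let `Γ = (V, E)` be a simple graph (symmetric, irreflexive) and let
`Ĩ` be the reflexive closure of `E`, giving the formal context `(V, V, Ĩ)`. Then for
every `A ⊆ V`, the pair `(A, A)` is a formal concept of that context (i.e. `A′ = A`
w.r.t. `Ĩ`) iff `A` is a maximal clique of `Γ`. -/
theorem concept_iff_maximal_clique {V : Type*} (E : V → V → Prop)
    (hsymm : ∀ u w : V, E u w → E w u) (hirr : ∀ v : V, ¬ E v v)
    (A : Set V) :
    {v : V | ∀ a ∈ A, a = v ∨ E a v} = A ↔
      ((∀ u ∈ A, ∀ w ∈ A, u ≠ w → E u w) ∧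
        ∀ B : Set V, A ⊆ B → (∀ u ∈ B, ∀ w ∈ B, u ≠ w → E u w) → B = A) :=
  concept_iff_maximal_clique_general E hsymm A
end
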